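/- For every ξ ∈ ℂ and λ ∈ ℂ, the sequence w(ξ) : ℤ → ℂ given by w_j = e^{i j ξ h} satisfies (L_p w)_j + λ w_j = 0 for all j ∈ ℤ if and only if P_p(2 cos(ξ h); λ) = 0, where cos denotes the complex cosine. -/

import Mathlib

/-- Coefficients `b_r(λ)` of the characteristic polynomial `P_p(·;λ)` associated with the
symmetric finite difference stencil `a`. -/
noncomputable def bcoef (p : ℕ) (a : ℤ → ℝ) (lam : ℂ) (r : ℕ) : ℂ :=
  if r = 0 then
    ((a 0 : ℂ) + lam) + 2 * ∑ l ∈ Finset.Icc 1 (p / 2), (-1 : ℂ) ^ l * (a (2 * l) : ℂ)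
  else if r % 2 = 0 then
    ∑ l ∈ Finset.Icc (r / 2) (p / 2),
      (-1 : ℂ) ^ (l - r / 2) * (Nat.choose (l + r / 2 - 1) (2 * (r / 2) - 1) : ℂ) *
        ((l : ℂ) / ((r / 2 : ℕ) : ℂ)) * (a (2 * l) : ℂ)
  else
    ∑ l ∈ Finset.Icc (r / 2) ((p + 1) / 2 - 1),
      (-1 : ℂ) ^ (l - r / 2) * (Nat.choose (l + r / 2) (2 * (r / 2)) : ℂ) *
        ((2 * (l : ℂ) + 1) / (2 * ((r / 2 : ℕ) : ℂ) + 1)) * (a (2 * l + 1) : ℂ)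

/-- The polynomial `P_p(z;λ) = Σ_{r=0}^p b_r(λ) z^r`. -/
noncomputable def Ppoly (p : ℕ) (a : ℤ → ℝ) (lam z : ℂ) : ℂ :=
  ∑ r ∈ Finset.range (p + 1), bcoef p a lam r * z ^ r

/-!
Factoring out `e^{ijθ}` with `θ = ξh`, the mode is a solution iff the symbol
`Σ_r a_r e^{irθ} + λ` vanishes. By symmetry of the stencil the symbol equals
`a_0 + λ + Σ_{l=1}^p a_l · 2cos(lθ) = a_0 + λ + Σ_{l=1}^p a_l C_l(2cos θ)`, where `C_l` is the
Vieta–Lucas polynomial (`Polynomial.Chebyshev.C`). Its explicit expansion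
`C_n(z) = Σ_k (-1)^k n/(n-k) binom(n-k,k) z^(n-2k)` follows from `C_{n+2} = z C_{n+1} - C_n` and
Pascal's rule; collecting the powers of `z` over the even and odd `l` gives exactly the
coefficients `b_r(λ)`.
-/

open Polynomial Finset

/-- `(-1)^k * lucasCoeff n k` is the coefficient of `X^(n-2k)` in `Chebyshev.C ℂ n`. At `k = n ≥ 1`
the division by `0` is harmless because the binomial factor vanishes. -/
noncomputable def lucasCoeff (n k : ℕ) : ℂ := n / ((n - k : ℕ) : ℂ) * ((n - k).choose k : ℂ)

lemma lucasCoeff_of_lt {n k : ℕ} (h : n < 2 * k) : lucasCoeff n k = 0 := by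
  simp [lucasCoeff, Nat.choose_eq_zero_of_lt (show n - k < k by omega)]

lemma lucasCoeff_zero_right {n : ℕ} (hn : n ≠ 0) : lucasCoeff n 0 = 1 := by
  simp [lucasCoeff, hn]

lemma lucasCoeff_two_mul_self {j : ℕ} (hj : j ≠ 0) : lucasCoeff (2 * j) j = 2 := by
  rw [lucasCoeff, show 2 * j - j = j by omega, Nat.choose_self]
  push_cast
  field_simp

lemma lucasCoeff_add_two {m : ℕ} (hm : m ≠ 0) (j : ℕ) :
    lucasCoeff (m + 2) (j + 1) = lucasCoeff (m + 1) (j + 1) + lucasCoeff m j := by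
  rcases lt_trichotomy m (2 * j) with hlt | rfl | hgt
  · simp only [lucasCoeff_of_lt (show m + 2 < 2 * (j + 1) by omega),
      lucasCoeff_of_lt (show m + 1 < 2 * (j + 1) by omega), lucasCoeff_of_lt hlt, add_zero]
  · rw [lucasCoeff_of_lt (show 2 * j + 1 < 2 * (j + 1) by omega),
      show 2 * j + 2 = 2 * (j + 1) by ring, lucasCoeff_two_mul_self (by omega),
      lucasCoeff_two_mul_self (by omega), zero_add]
  · obtain ⟨q, rfl⟩ : ∃ q, m = j + q := ⟨m - j, by omega⟩
    have hq : j < q := by omega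
    rw [lucasCoeff, lucasCoeff, lucasCoeff, show j + q + 2 - (j + 1) = q + 1 by omega,
      show j + q + 1 - (j + 1) = q by omega, show j + q - j = q by omega,
      Nat.choose_succ_succ']
    have hsucc : ((q.choose (j + 1) : ℕ) : ℂ) * (j + 1) = (q.choose j : ℂ) * (q - j) := by
      rw [← Nat.cast_sub hq.le]
      exact_mod_cast Nat.choose_succ_right_eq q j
    have hq0 : (q : ℂ) ≠ 0 := Nat.cast_ne_zero.mpr (by omega)
    have hq1 : (q : ℂ) + 1 ≠ 0 := by exact_mod_cast Nat.succ_ne_zero q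
    push_cast
    field_simp
    linear_combination -hsucc

lemma eval_chebyshevC_eq_sum {n N : ℕ} (hn : n ≠ 0) (hN : n < 2 * N) (z : ℂ) :
    (Chebyshev.C ℂ n).eval z = ∑ k ∈ range N, (-1) ^ k * lucasCoeff n k * z ^ (n - 2 * k) := by
  induction n using Nat.strong_induction_on generalizing N with
  | _ n ih =>
  obtain ⟨N, rfl⟩ : ∃ N', N = N' + 1 := ⟨N - 1, by omega⟩
  rw [sum_range_succ', lucasCoeff_zero_right hn]
  match n, hn with
  | 1, _ =>
    rw [sum_eq_zero fun k _ ↦ by rw [lucasCoeff_of_lt (by omega)]; ring]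
    simp
  | 2, _ =>
    obtain ⟨N, rfl⟩ : ∃ N', N = N' + 1 := ⟨N - 1, by omega⟩
    rw [sum_range_succ', sum_eq_zero fun k _ ↦ by rw [lucasCoeff_of_lt (by omega)]; ring]
    simp [lucasCoeff, Chebyshev.C_two]
    ring
  | m + 3, _ =>
    have hrec : Chebyshev.C ℂ ((m + 3 : ℕ) : ℤ)
        = X * Chebyshev.C ℂ ((m + 2 : ℕ) : ℤ) - Chebyshev.C ℂ ((m + 1 : ℕ) : ℤ) := by
      push_cast
      exact Chebyshev.C_add_two ℂ (m + 1)
    have hterm : ∀ k ∈ range N,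
        (-1) ^ (k + 1) * lucasCoeff (m + 3) (k + 1) * z ^ (m + 3 - 2 * (k + 1))
        = z * ((-1) ^ (k + 1) * lucasCoeff (m + 2) (k + 1) * z ^ (m + 2 - 2 * (k + 1)))
          - (-1) ^ k * lucasCoeff (m + 1) k * z ^ (m + 1 - 2 * k) := by
      intro k _
      rw [lucasCoeff_add_two (by omega)]
      rcases Nat.lt_or_ge (m + 2) (2 * (k + 1)) with hk | hk
      · rw [lucasCoeff_of_lt hk, show m + 3 - 2 * (k + 1) = m + 1 - 2 * k by omega]
        ring
      · rw [show m + 3 - 2 * (k + 1) = m + 2 - 2 * (k + 1) + 1 by omega,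
          show m + 1 - 2 * k = m + 2 - 2 * (k + 1) + 1 by omega]
        ring
    rw [hrec, eval_sub, eval_mul, eval_X, ih (m + 2) (by omega) (by omega) (N := N + 1) (by omega),
      ih (m + 1) (by omega) (by omega) (N := N) (by omega), sum_congr rfl hterm, sum_sub_distrib,
      ← mul_sum, sum_range_succ' _ N, lucasCoeff_zero_right (by omega)]
    simp only [Nat.mul_zero, Nat.sub_zero]
    ring

lemma lucasCoeff_two_mul_sub {l k : ℕ} (hk : k ≠ 0) (hkl : k ≤ l) :
    lucasCoeff (2 * l) (l - k) = ((l + k - 1).choose (2 * k - 1) : ℂ) * ((l : ℂ) / (k : ℂ)) := by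
  rw [lucasCoeff, show 2 * l - (l - k) = l + k by omega,
    show l - k = l + k - 2 * k by omega, Nat.choose_symm (by omega)]
  have hchoose : ((l + k : ℕ) : ℂ) * ((l + k - 1).choose (2 * k - 1) : ℂ)
      = ((l + k).choose (2 * k) : ℂ) * (2 * k : ℕ) := by
    have h := Nat.add_one_mul_choose_eq (l + k - 1) (2 * k - 1)
    rw [show l + k - 1 + 1 = l + k by omega, show 2 * k - 1 + 1 = 2 * k by omega] at h
    exact_mod_cast h
  have hlk : (l : ℂ) + k ≠ 0 := by exact_mod_cast (show l + k ≠ 0 by omega)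
  have hk0 : (k : ℂ) ≠ 0 := Nat.cast_ne_zero.mpr hk
  push_cast at hchoose ⊢
  field_simp
  linear_combination -(l : ℂ) * hchoose

lemma lucasCoeff_two_mul_add_one_sub {l k : ℕ} (hkl : k ≤ l) :
    lucasCoeff (2 * l + 1) (l - k)
      = ((l + k).choose (2 * k) : ℂ) * ((2 * (l : ℂ) + 1) / (2 * (k : ℂ) + 1)) := by
  rw [lucasCoeff, show 2 * l + 1 - (l - k) = l + k + 1 by omega,
    show l - k = l + k + 1 - (2 * k + 1) by omega, Nat.choose_symm (by omega)]
  have hchoose : ((l + k + 1 : ℕ) : ℂ) * ((l + k).choose (2 * k) : ℂ)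
      = ((l + k + 1).choose (2 * k + 1) : ℂ) * ((2 * k + 1 : ℕ) : ℂ) := by
    exact_mod_cast Nat.add_one_mul_choose_eq (l + k) (2 * k)
  have hlk : (l : ℂ) + k + 1 ≠ 0 := by exact_mod_cast (show l + k + 1 ≠ 0 by omega)
  have hk : 2 * (k : ℂ) + 1 ≠ 0 := by exact_mod_cast (show 2 * k + 1 ≠ 0 by omega)
  push_cast at hchoose ⊢
  field_simp
  linear_combination -(2 * (l : ℂ) + 1) * hchoose

lemma eval_chebyshevC_two_mul {l : ℕ} (hl : l ≠ 0) (z : ℂ) :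
    (Chebyshev.C ℂ (2 * l : ℕ)).eval z = 2 * (-1) ^ l + ∑ k ∈ Icc 1 l, (-1) ^ (l - k)
      * ((l + k - 1).choose (2 * k - 1) : ℂ) * ((l : ℂ) / (k : ℂ)) * z ^ (2 * k) := by
  rw [eval_chebyshevC_eq_sum (N := l + 1) (by omega) (by omega), ← sum_range_reflect,
    sum_range_succ', ← Ico_add_one_right_eq_Icc, sum_Ico_eq_sum_range, add_tsub_cancel_right,
    add_comm, Nat.sub_zero, lucasCoeff_two_mul_self hl, Nat.sub_self, pow_zero, mul_one]
  refine congrArg₂ _ (mul_comm _ _) (sum_congr rfl fun k hk ↦ ?_)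
  rw [mem_range] at hk
  rw [add_comm 1 k, lucasCoeff_two_mul_sub (by omega) (by omega),
    show 2 * l - 2 * (l - (k + 1)) = 2 * (k + 1) by omega]
  push_cast
  ring

lemma eval_chebyshevC_two_mul_add_one (l : ℕ) (z : ℂ) :
    (Chebyshev.C ℂ (2 * l + 1 : ℕ)).eval z = ∑ k ∈ range (l + 1), (-1) ^ (l - k)
      * ((l + k).choose (2 * k) : ℂ) * ((2 * (l : ℂ) + 1) / (2 * (k : ℂ) + 1))
      * z ^ (2 * k + 1) := by
  rw [eval_chebyshevC_eq_sum (N := l + 1) (by omega) (by omega), ← sum_range_reflect]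
  refine sum_congr rfl fun k hk ↦ ?_
  rw [mem_range] at hk
  rw [Nat.add_sub_cancel, lucasCoeff_two_mul_add_one_sub (by omega),
    show 2 * l + 1 - 2 * (l - k) = 2 * k + 1 by omega]
  ring

lemma sum_Icc_one_eq_even_add_odd {M : Type*} [AddCommMonoid M] (p : ℕ) (f : ℕ → M) :
    ∑ r ∈ Icc 1 p, f r
      = ∑ k ∈ Icc 1 (p / 2), f (2 * k) + ∑ k ∈ range ((p + 1) / 2), f (2 * k + 1) := by
  induction p with
  | zero => simp
  | succ p ih =>
    rw [sum_Icc_succ_top (by omega), ih]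
    rcases Nat.even_or_odd p with ⟨q, rfl⟩ | ⟨q, rfl⟩
    · rw [show (q + q + 1 + 1) / 2 = q + 1 by omega, show (q + q + 1) / 2 = q by omega,
        show (q + q) / 2 = q by omega, sum_range_succ, show q + q + 1 = 2 * q + 1 by omega]
      abel
    · rw [show (2 * q + 1 + 1) / 2 = q + 1 by omega, show (2 * q + 1 + 1 + 1) / 2 = q + 1 by omega,
        show (2 * q + 1) / 2 = q by omega, sum_Icc_succ_top (by omega),
        show 2 * (q + 1) = 2 * q + 1 + 1 by omega]
      abel

lemma bcoef_two_mul {p k : ℕ} (hk : k ≠ 0) (a : ℤ → ℝ) (lam : ℂ) :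
    bcoef p a lam (2 * k) = ∑ l ∈ Icc k (p / 2), (-1 : ℂ) ^ (l - k)
      * (Nat.choose (l + k - 1) (2 * k - 1) : ℂ) * ((l : ℂ) / (k : ℂ)) * (a (2 * l) : ℂ) := by
  rw [bcoef, if_neg (by omega), if_pos (by omega), Nat.mul_div_cancel_left k two_pos]

lemma bcoef_two_mul_add_one (p k : ℕ) (a : ℤ → ℝ) (lam : ℂ) :
    bcoef p a lam (2 * k + 1) = ∑ l ∈ Icc k ((p + 1) / 2 - 1), (-1 : ℂ) ^ (l - k)
      * (Nat.choose (l + k) (2 * k) : ℂ) * ((2 * (l : ℂ) + 1) / (2 * (k : ℂ) + 1))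
      * (a (2 * l + 1) : ℂ) := by
  rw [bcoef, if_neg (by omega), if_neg (by omega), show (2 * k + 1) / 2 = k by omega]

lemma sum_bcoef_two_mul (p : ℕ) (a : ℤ → ℝ) (lam z : ℂ) :
    ∑ k ∈ Icc 1 (p / 2), bcoef p a lam (2 * k) * z ^ (2 * k)
      = ∑ l ∈ Icc 1 (p / 2),
          (a (2 * l) : ℂ) * ((Chebyshev.C ℂ (2 * l : ℕ)).eval z - 2 * (-1) ^ l) := by
  rw [sum_congr rfl fun k hk ↦ by
    rw [bcoef_two_mul (by simp only [mem_Icc] at hk; omega), sum_mul]]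
  rw [sum_comm' (t' := Icc 1 (p / 2)) (s' := fun l ↦ Icc 1 l)
    (by intro k l; simp only [mem_Icc]; omega)]
  refine sum_congr rfl fun l hl ↦ ?_
  rw [eval_chebyshevC_two_mul (by simp only [mem_Icc] at hl; omega), add_sub_cancel_left, mul_sum]
  refine sum_congr rfl fun k _ ↦ ?_
  ring

lemma sum_bcoef_two_mul_add_one (p : ℕ) (a : ℤ → ℝ) (lam z : ℂ) :
    ∑ k ∈ range ((p + 1) / 2), bcoef p a lam (2 * k + 1) * z ^ (2 * k + 1)
      = ∑ l ∈ range ((p + 1) / 2),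
          (a (2 * l + 1) : ℂ) * (Chebyshev.C ℂ (2 * l + 1 : ℕ)).eval z := by
  simp_rw [bcoef_two_mul_add_one, sum_mul]
  rw [sum_comm' (t' := range ((p + 1) / 2)) (s' := fun l ↦ range (l + 1))
    (by intro k l; simp only [mem_Icc, mem_range]; omega)]
  refine sum_congr rfl fun l _ ↦ ?_
  rw [eval_chebyshevC_two_mul_add_one, mul_sum]
  refine sum_congr rfl fun k _ ↦ ?_
  ring

lemma Ppoly_eq_sum_chebyshevC (p : ℕ) (a : ℤ → ℝ) (lam z : ℂ) :
    Ppoly p a lam z = (a 0 : ℂ) + lam + ∑ l ∈ Icc 1 p, (a l : ℂ) * (Chebyshev.C ℂ l).eval z := by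
  rw [Ppoly, range_eq_Ico, sum_eq_sum_Ico_succ_bot (by omega : 0 < p + 1), zero_add,
    Ico_add_one_right_eq_Icc, sum_Icc_one_eq_even_add_odd, sum_bcoef_two_mul,
    sum_bcoef_two_mul_add_one,
    sum_Icc_one_eq_even_add_odd p fun l ↦ (a l : ℂ) * (Chebyshev.C ℂ l).eval z, bcoef, if_pos rfl]
  simp only [mul_sub, sum_sub_distrib, mul_sum]
  push_cast
  ring_nf

lemma sum_Icc_neg_self {M : Type*} [AddCommMonoid M] (p : ℕ) (f : ℤ → M) :
    ∑ r ∈ Icc (-(p : ℤ)) p, f r = f 0 + ∑ l ∈ Icc 1 p, (f l + f (-l)) := by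
  induction p with
  | zero => simp
  | succ p ih =>
    have hIcc : Icc (-((p + 1 : ℕ) : ℤ)) ((p + 1 : ℕ) : ℤ)
        = insert (-((p + 1 : ℕ) : ℤ)) (insert ((p + 1 : ℕ) : ℤ) (Icc (-(p : ℤ)) p)) := by
      ext x
      simp only [mem_Icc, mem_insert]
      omega
    rw [hIcc, sum_insert (by simp only [mem_insert, mem_Icc]; omega),
      sum_insert (by simp only [mem_Icc]; omega), ih, sum_Icc_succ_top (by omega)]
    push_cast
    abel

lemma sum_symm_mul_exp {a : ℤ → ℝ} (hsym : ∀ r, a (-r) = a r) (p : ℕ) (θ : ℂ) :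
    ∑ r ∈ Icc (-(p : ℤ)) p, (a r : ℂ) * Complex.exp (Complex.I * r * θ)
      = a 0 + ∑ l ∈ Icc 1 p, (a l : ℂ) * (Chebyshev.C ℂ l).eval (2 * Complex.cos θ) := by
  rw [sum_Icc_neg_self]
  congr 1
  · simp
  · refine sum_congr rfl fun l _ ↦ ?_
    rw [hsym, Chebyshev.C_two_mul_complex_cos, Complex.two_cos]
    push_cast
    ring_nf

lemma residual_eq_exp_mul_Ppoly (p : ℕ) (h : ℝ) {a : ℤ → ℝ} (hsym : ∀ r, a (-r) = a r)
    (ξ lam : ℂ) (j : ℤ) :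
    (∑ r ∈ Icc (-(p : ℤ)) (p : ℤ),
        (a r : ℂ) * Complex.exp (Complex.I * ((j + r : ℤ) : ℂ) * ξ * (h : ℂ))) +
        lam * Complex.exp (Complex.I * (j : ℂ) * ξ * (h : ℂ))
      = Complex.exp (Complex.I * (j : ℂ) * ξ * (h : ℂ))
          * Ppoly p a lam (2 * Complex.cos (ξ * h)) := by
  have hshift : ∀ r : ℤ, Complex.exp (Complex.I * ((j + r : ℤ) : ℂ) * ξ * h)
      = Complex.exp (Complex.I * j * ξ * h) * Complex.exp (Complex.I * r * (ξ * h)) := by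
    intro r
    rw [← Complex.exp_add]
    push_cast
    ring_nf
  simp only [hshift, mul_left_comm _ (Complex.exp (Complex.I * j * ξ * h)), ← mul_sum,
    sum_symm_mul_exp hsym, Ppoly_eq_sum_chebyshevC]
  ring

theorem stmt1_general (p : ℕ) (h : ℝ)
    (a : ℤ → ℝ) (hsym : ∀ r : ℤ, a (-r) = a r)
    (ξ lam : ℂ) :
    (∀ j : ℤ, (∑ r ∈ Finset.Icc (-(p : ℤ)) (p : ℤ),
        (a r : ℂ) * Complex.exp (Complex.I * ((j + r : ℤ) : ℂ) * ξ * (h : ℂ))) +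
        lam * Complex.exp (Complex.I * (j : ℂ) * ξ * (h : ℂ)) = 0) ↔
    Ppoly p a lam (2 * Complex.cos (ξ * (h : ℂ))) = 0 := by
  simp only [residual_eq_exp_mul_Ppoly p h hsym, mul_eq_zero, Complex.exp_ne_zero, false_or,
    forall_const]

/-- the mode `w_j = e^{i j ξ h}` solves `L_p w + λ w = 0` iff
`P_p(2 cos(ξ h); λ) = 0`. -/
theorem stmt1 (p : ℕ) (hp : 1 ≤ p) (h : ℝ) (hh : 0 < h)
    (a : ℤ → ℝ) (hsym : ∀ r : ℤ, a (-r) = a r)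
    (ξ lam : ℂ) :
    (∀ j : ℤ, (∑ r ∈ Finset.Icc (-(p : ℤ)) (p : ℤ),
        (a r : ℂ) * Complex.exp (Complex.I * ((j + r : ℤ) : ℂ) * ξ * (h : ℂ))) +
        lam * Complex.exp (Complex.I * (j : ℂ) * ξ * (h : ℂ)) = 0) ↔
    Ppoly p a lam (2 * Complex.cos (ξ * (h : ℂ))) = 0 :=
  stmt1_general p h a hsym ξ lam
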